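/- Let ε_1 > ε_2 > … > ε_l > 0 be real numbers and let W̄ = z_2 + z_1·∏_{i=1}^{l}(1 + T^{−ε_i}·z_2) over Λ. Then for each i = 1,…,l, the critical point α_i = ( −T^{ε_i}·∏_{j≠i}(1 − T^{ε_i − ε_j})^{−1}, −T^{ε_i} ) of W̄ satisfies (val(α_{i,1}), val(α_{i,2})) = ( ε_i + Σ_{j=1}^{i−1}(ε_j − ε_i), ε_i ). -/

import Mathlib

/-!
The point `α_i` has second coordinate `-T^{ε_i}`, the root of the `i`-th factor
`1 + T^{-ε_i} z₂` of `W̄`. Hence `∂W̄/∂z₁ = ∏_j (1 + T^{-ε_j} z₂)` vanishes at `α_i`, and there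
`∂W̄/∂z₂ = 1 + z₁ T^{-ε_i} ∏_{j ≠ i} (1 - T^{ε_i - ε_j})`, which vanishes by the choice of `z₁`.
For the valuations, `val (1 - T^a) = min 0 a` when `a ≠ 0` (the two terms have distinct
valuations), so the factor `(1 - T^{ε_i - ε_j})⁻¹` contributes `max 0 (ε_j - ε_i)`, which is
`ε_j - ε_i` for `j < i` and `0` for `j > i` since `ε` is decreasing.
-/

open Finset MvPolynomial

noncomputable section

/-- The Novikov field `Λ` over `ℂ`, modelled as the field of Hahn series over `ℂ`
with value group `ℝ`. -/
abbrev Novikov : Type := HahnSeries ℝ ℂ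

/-- The monomial `T^r` with coefficient `1` and exponent `r`. -/
def Tpow (r : ℝ) : Novikov := HahnSeries.single r 1

/-- The valuation `val x ∈ ℝ` of `x ∈ Λ`: the smallest exponent occurring in `x`
(junk value `0` at `x = 0`). -/
def nval (x : Novikov) : ℝ := x.order

/-- `z` is a critical point of the two-variable polynomial `W` in `(Λ^×)²`: both
coordinates of `z` are nonzero and both partial derivatives of `W` vanish at `z`. -/
def PIsCritPt (W : MvPolynomial (Fin 2) Novikov) (z : Fin 2 → Novikov) : Prop :=
  (∀ i, z i ≠ 0) ∧ ∀ i : Fin 2, eval z (pderiv i W) = 0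

/-- `z` is a nondegenerate critical point of `W`: a critical point at which the determinant
of the Hessian matrix `(∂²W/∂z_i∂z_j)(z)` is nonzero. -/
def PIsNondegCritPt (W : MvPolynomial (Fin 2) Novikov) (z : Fin 2 → Novikov) : Prop :=
  PIsCritPt W z ∧
    (Matrix.of fun i j : Fin 2 => eval z (pderiv i (pderiv j W))).det ≠ 0

/-- The local model `W̄ = z₂ + z₁ ∏_{i=1}^{l} (1 + T^{-ε_i} z₂)` of the mirror potential near
a corner of the moment polytope after `l` non-toric blowups of sizes `ε_1, …, ε_l`. -/
def Wbar (l : ℕ) (ε : Fin l → ℝ) : MvPolynomial (Fin 2) Novikov :=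
  X 1 + X 0 * ∏ i, (1 + C (Tpow (-ε i)) * X 1)

/-- The critical point of `W̄` associated with the `i`-th blowup:
`α_i = (-T^{ε_i} ∏_{j ≠ i} (1 - T^{ε_i - ε_j})⁻¹, -T^{ε_i})`. -/
def alphPt (l : ℕ) (ε : Fin l → ℝ) (i : Fin l) : Fin 2 → Novikov :=
  ![-(Tpow (ε i)) * ∏ j ∈ Finset.univ.erase i, (1 - Tpow (ε i - ε j))⁻¹, -(Tpow (ε i))]

theorem AddValuation.map_prod {R Γ₀ ι : Type*} [CommRing R] [LinearOrderedAddCommMonoidWithTop Γ₀]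
    (v : AddValuation R Γ₀) (s : Finset ι) (f : ι → R) :
    v (∏ j ∈ s, f j) = ∑ j ∈ s, v (f j) := by
  induction s using Finset.cons_induction with
  | empty => simp
  | cons a s _ ih => rw [prod_cons, sum_cons, v.map_mul, ih]

theorem Antitone.sum_erase_max_sub_eq_sum_filter_lt {ι : Type*} [Fintype ι] [LinearOrder ι]
    {ε : ι → ℝ} (hε : Antitone ε) (i : ι) :
    ∑ j ∈ univ.erase i, max 0 (ε j - ε i) = ∑ j ∈ univ.filter (fun j => j < i), (ε j - ε i) := by
  rw [sum_erase _ (by simp), sum_filter]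
  refine sum_congr rfl fun j _ => ?_
  split_ifs with hji
  · exact max_eq_right (sub_nonneg.2 (hε hji.le))
  · exact max_eq_left (sub_nonpos.2 (hε (not_lt.1 hji)))

theorem MvPolynomial.eval_pderiv_prod_of_eval_eq_zero {σ R ι : Type*} [CommSemiring R]
    [DecidableEq ι] (z : σ → R) (k : σ) {s : Finset ι} (f : ι → MvPolynomial σ R) {i : ι}
    (hi : i ∈ s) (hroot : eval z (f i) = 0) :
    eval z (pderiv k (∏ j ∈ s, f j)) =
      eval z (pderiv k (f i)) * ∏ j ∈ s.erase i, eval z (f j) := by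
  rw [← mul_prod_erase s f hi, pderiv_mul, eval_add, eval_mul, eval_mul, hroot, zero_mul,
    add_zero, eval_prod]

-- Valuations are computed with `addVal`, valued in `WithTop ℝ`: unlike `nval`, it has no junk
-- value at `0`, is multiplicative on products and inverses, and a finite value forces `x ≠ 0`.
local notation "val" => HahnSeries.addVal ℝ ℂ

theorem Tpow_ne_zero (r : ℝ) : Tpow r ≠ 0 := HahnSeries.single_ne_zero one_ne_zero

theorem Tpow_zero : Tpow 0 = 1 := HahnSeries.single_zero_one

theorem Tpow_add (r s : ℝ) : Tpow (r + s) = Tpow r * Tpow s := by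
  simp [Tpow, HahnSeries.single_mul_single]

theorem addVal_Tpow (r : ℝ) : val (Tpow r) = r := by
  rw [HahnSeries.addVal_apply, Tpow, HahnSeries.orderTop_single one_ne_zero]

theorem addVal_one_sub_Tpow {a : ℝ} (ha : a ≠ 0) : val (1 - Tpow a) = ↑(min 0 a) := by
  have hne : val 1 ≠ val (-Tpow a) := by
    rw [AddValuation.map_one, AddValuation.map_neg, addVal_Tpow]
    exact_mod_cast ha.symm
  rw [sub_eq_add_neg, AddValuation.map_add_of_distinct_val _ hne, AddValuation.map_one,
    AddValuation.map_neg, addVal_Tpow, WithTop.coe_min, WithTop.coe_zero]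

theorem one_sub_Tpow_ne_zero {a : ℝ} (ha : a ≠ 0) : 1 - Tpow a ≠ 0 := by
  rw [← AddValuation.ne_top_iff val, addVal_one_sub_Tpow ha]
  exact WithTop.coe_ne_top

theorem nval_eq_of_addVal_eq {x : Novikov} {r : ℝ} (h : val x = r) : nval x = r := by
  have hx : x ≠ 0 := by
    rw [← AddValuation.ne_top_iff val, h]
    exact WithTop.coe_ne_top
  rw [HahnSeries.addVal_apply_of_ne hx] at h
  exact WithTop.coe_injective h

section CriticalPoint

variable {l : ℕ} {ε : Fin l → ℝ} (i : Fin l)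

theorem prod_one_sub_Tpow_ne_zero (hε : Function.Injective ε) :
    ∏ j ∈ univ.erase i, (1 - Tpow (ε i - ε j)) ≠ 0 :=
  prod_ne_zero_iff.2 fun _ hj =>
    one_sub_Tpow_ne_zero (sub_ne_zero.2 fun h => ne_of_mem_erase hj (hε h).symm)

theorem alphPt_zero :
    alphPt l ε i 0 = -Tpow (ε i) * (∏ j ∈ univ.erase i, (1 - Tpow (ε i - ε j)))⁻¹ := by
  rw [← prod_inv_distrib]
  rfl

theorem alphPt_one : alphPt l ε i 1 = -Tpow (ε i) := rfl

theorem alphPt_ne_zero (hε : Function.Injective ε) : ∀ k, alphPt l ε i k ≠ 0 := by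
  refine Fin.forall_fin_two.2 ⟨?_, ?_⟩
  · rw [alphPt_zero]
    exact mul_ne_zero (neg_ne_zero.2 (Tpow_ne_zero _))
      (inv_ne_zero (prod_one_sub_Tpow_ne_zero i hε))
  · rw [alphPt_one]
    exact neg_ne_zero.2 (Tpow_ne_zero _)

theorem eval_alphPt_factor (j : Fin l) :
    eval (alphPt l ε i) (1 + C (Tpow (-ε j)) * X 1) = 1 - Tpow (ε i - ε j) := by
  rw [eval_add, eval_mul, eval_C, eval_X, map_one, alphPt_one, sub_eq_neg_add (ε i), Tpow_add]
  ring

theorem eval_pderiv_Wbar_alphPt (hε : Function.Injective ε) :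
    ∀ k, eval (alphPt l ε i) (pderiv k (Wbar l ε)) = 0 := by
  classical
  set f : Fin l → MvPolynomial (Fin 2) Novikov := fun j => 1 + C (Tpow (-ε j)) * X 1
  have hroot : eval (alphPt l ε i) (f i) = 0 := by
    rw [eval_alphPt_factor, sub_self, Tpow_zero, sub_self]
  have hprod : eval (alphPt l ε i) (∏ j, f j) = 0 := by
    rw [eval_prod]
    exact prod_eq_zero (mem_univ i) hroot
  have hW (k : Fin 2) : eval (alphPt l ε i) (pderiv k (Wbar l ε)) =
      eval (alphPt l ε i) (pderiv k (X 1)) +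
        alphPt l ε i 0 * eval (alphPt l ε i) (pderiv k (f i)) *
          ∏ j ∈ univ.erase i, (1 - Tpow (ε i - ε j)) := by
    rw [Wbar, map_add, pderiv_mul, eval_add, eval_add, eval_mul, eval_mul, hprod,
      eval_pderiv_prod_of_eval_eq_zero _ k f (mem_univ i) hroot, eval_X, mul_zero, zero_add,
      mul_assoc]
    simp only [f, eval_alphPt_factor]
  refine Fin.forall_fin_two.2 ⟨?_, ?_⟩
  · simp [hW, f]
  · have hT : Tpow (ε i) * Tpow (-ε i) = 1 := by rw [← Tpow_add, add_neg_cancel, Tpow_zero]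
    rw [hW, alphPt_zero]
    simp only [f, pderiv_X_self, map_one, map_add, pderiv_one, pderiv_C_mul, mul_one, zero_add,
      eval_C]
    linear_combination
      (-(Tpow (ε i) * Tpow (-ε i))) * inv_mul_cancel₀ (prod_one_sub_Tpow_ne_zero i hε) - hT

theorem addVal_alphPt_zero (hε : StrictAnti ε) :
    val (alphPt l ε i 0) = ↑(ε i + ∑ j ∈ univ.filter (fun j => j < i), (ε j - ε i)) := by
  have hfactor (j) (hj : j ∈ univ.erase i) :
      val (1 - Tpow (ε i - ε j))⁻¹ = ↑(max 0 (ε j - ε i)) := by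
    rw [AddValuation.map_inv,
      addVal_one_sub_Tpow (sub_ne_zero.2 fun h => ne_of_mem_erase hj (hε.injective h).symm),
      ← WithTop.LinearOrderedAddCommGroup.coe_neg, ← max_neg_neg, neg_zero, neg_sub]
  rw [← hε.antitone.sum_erase_max_sub_eq_sum_filter_lt, alphPt, Matrix.cons_val_zero,
    AddValuation.map_mul, AddValuation.map_neg, addVal_Tpow, AddValuation.map_prod,
    sum_congr rfl hfactor, WithTop.coe_add, WithTop.coe_sum]

end CriticalPoint

theorem nontoric_critical_point_valuations_general
    (l : ℕ) (ε : Fin l → ℝ) (hanti : StrictAnti ε) (i : Fin l) :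
    PIsCritPt (Wbar l ε) (alphPt l ε i) ∧
    nval (alphPt l ε i 0) = ε i + ∑ j ∈ Finset.univ.filter (fun j => j < i), (ε j - ε i) ∧
    nval (alphPt l ε i 1) = ε i :=
  ⟨⟨alphPt_ne_zero i hanti.injective, eval_pderiv_Wbar_alphPt i hanti.injective⟩,
    nval_eq_of_addVal_eq (addVal_alphPt_zero i hanti),
    nval_eq_of_addVal_eq (by rw [alphPt_one, AddValuation.map_neg, addVal_Tpow])⟩

/-- The valuation computation of Section 5.5 of the paper: for `ε_1 > ε_2 > ⋯ > ε_l > 0`,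
the critical point `α_i = (-T^{ε_i} ∏_{j ≠ i} (1 - T^{ε_i - ε_j})⁻¹, -T^{ε_i})` of
`W̄ = z₂ + z₁ ∏_{i=1}^{l} (1 + T^{-ε_i} z₂)` satisfies
`(val α_{i,1}, val α_{i,2}) = (ε_i + ∑_{j<i} (ε_j - ε_i), ε_i)`. -/
theorem nontoric_critical_point_valuations
    (l : ℕ) (ε : Fin l → ℝ) (hanti : StrictAnti ε) (hpos : ∀ i, 0 < ε i) (i : Fin l) :
    PIsCritPt (Wbar l ε) (alphPt l ε i) ∧
    nval (alphPt l ε i 0) = ε i + ∑ j ∈ Finset.univ.filter (fun j => j < i), (ε j - ε i) ∧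
    nval (alphPt l ε i 1) = ε i :=
  nontoric_critical_point_valuations_general l ε hanti i

end
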